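/- arXiv:2509.03004 — 2 statements merged into one kernel-verified Lean document; each statement's English description precedes it below -/
import Mathlib

section
/- If a quantum hidden Markov model with memory dimension d over a finite alphabet X generates the word-probability function P : X* → ℝ, then the Hankel rank of P is at most d². Equivalently, any QHMM generating a process whose Hankel rank equals ℓ_min must have memory dimension d ≥ √ℓ_min. -/
open Matrix
open scoped ComplexOrder

noncomputable section

/-- A quantum hidden Markov model over alphabet `X` with memory dimension `d`:
a density matrix `σ0` together with Kraus operators `K x y` (with trashed
alphabet `Fin m`) summing to a trace-preserving map. -/
structure QHMM (X : Type) [Fintype X] (d : ℕ) where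
  m : ℕ
  σ0 : Matrix (Fin d) (Fin d) ℂ
  K : X → Fin m → Matrix (Fin d) (Fin d) ℂ
  σ0_posSemidef : σ0.PosSemidef
  σ0_trace : σ0.trace = 1
  kraus_normalized : ∑ x : X, ∑ y : Fin m, (K x y)ᴴ * K x y = 1

namespace QHMM

variable {X : Type} [Fintype X] {d : ℕ}

/-- The completely positive map associated with symbol `x`. -/
def A (M : QHMM X d) (x : X) (ρ : Matrix (Fin d) (Fin d) ℂ) : Matrix (Fin d) (Fin d) ℂ :=
  ∑ y : Fin M.m, M.K x y * ρ * (M.K x y)ᴴ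

/-- The map associated with a word: `A_w = A_{x_{L-1}} ∘ ⋯ ∘ A_{x_0}` (empty word ↦ identity). -/
def Aw (M : QHMM X d) (w : List X) (ρ : Matrix (Fin d) (Fin d) ℂ) : Matrix (Fin d) (Fin d) ℂ :=
  w.foldl (fun σ x => M.A x σ) ρ

/-- The word-probability function of the QHMM: `P(w) = tr[A_w(σ0)]`. -/
def P (M : QHMM X d) (w : List X) : ℝ := (M.Aw w M.σ0).trace.re

/-- Conditional probability `P(w_f | w_h) = tr[A_{w_f}(A_{w_h}(σ0))]/tr[A_{w_h}(σ0)]`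
when `tr[A_{w_h}(σ0)] > 0`, and `0` otherwise. -/
def condP (M : QHMM X d) (wf wh : List X) : ℝ :=
  if 0 < (M.Aw wh M.σ0).trace.re then
    (M.Aw wf (M.Aw wh M.σ0)).trace.re / (M.Aw wh M.σ0).trace.re
  else 0

/-- The history space: real span of all observation-induced memory states. -/
def historySpace (M : QHMM X d) : Submodule ℝ (Matrix (Fin d) (Fin d) ℂ) :=
  Submodule.span ℝ {ρ | ∃ w : List X, ρ = M.Aw w M.σ0}

/-- The linear functional `ρ ↦ tr[A_w(ρ)]` induced by the future word `w`. -/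
def futureFunctional (M : QHMM X d) (w : List X) : Matrix (Fin d) (Fin d) ℂ → ℂ :=
  fun ρ => (M.Aw w ρ).trace

/-- The future space: real span of the future-word functionals. -/
def futureSpace (M : QHMM X d) : Submodule ℝ (Matrix (Fin d) (Fin d) ℂ → ℂ) :=
  Submodule.span ℝ {f | ∃ w : List X, f = M.futureFunctional w}

/-- The inert history: elements of the history space annihilated by every future functional. -/
def inertHistorySet (M : QHMM X d) : Set (Matrix (Fin d) (Fin d) ℂ) :=
  {h | h ∈ M.historySpace ∧ ∀ w : List X, (M.Aw w h).trace = 0}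

/-- The inert future: functionals in the future space annihilating the whole history space. -/
def inertFutureSet (M : QHMM X d) : Set (Matrix (Fin d) (Fin d) ℂ → ℂ) :=
  {f | f ∈ M.futureSpace ∧ ∀ h ∈ M.historySpace, f h = 0}

/-- A history wordlist is sufficient if the induced states, together with the inert
history, span the history space. -/
def SufficientHistory (M : QHMM X d) (Ω : Set (List X)) : Prop :=
  Submodule.span ℝ ({ρ | ∃ w ∈ Ω, ρ = M.Aw w M.σ0} ∪ M.inertHistorySet) = M.historySpace

/-- A future wordlist is sufficient if the induced functionals, together with the inert
future, span the future space. -/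
def SufficientFuture (M : QHMM X d) (Ω : Set (List X)) : Prop :=
  Submodule.span ℝ ({f | ∃ w ∈ Ω, f = M.futureFunctional w} ∪ M.inertFutureSet) = M.futureSpace

end QHMM

/-- A generalized hidden Markov model over alphabet `X` with latent dimension `n`. -/
structure GHMM (X : Type) [Fintype X] (n : ℕ) where
  η0 : Fin n → ℝ
  T : X → Matrix (Fin n) (Fin n) ℝ
  τ : Fin n → ℝ
  fixed : (∑ x : X, T x) *ᵥ τ = τ
  normalized : η0 ⬝ᵥ τ = 1

namespace GHMM

variable {X : Type} [Fintype X] {n : ℕ}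

/-- The word-probability function of the GHMM: `P(w) = η₀ T^(x₀)⋯T^(x_{L-1}) τ`. -/
def P (G : GHMM X n) (w : List X) : ℝ := G.η0 ⬝ᵥ ((w.map G.T).prod *ᵥ G.τ)

end GHMM

/-- The Hankel rank of a word function `P`: the real dimension of the span of its
left-translates `v ↦ P (u ++ v)`. -/
def hankelRank {X : Type} (P : List X → ℝ) : Cardinal :=
  Module.rank ℝ ↥(Submodule.span ℝ {f : List X → ℝ | ∃ u : List X, f = fun v => P (u ++ v)})



namespace QHMM

variable {X : Type} [Fintype X] {d : ℕ}

lemma Aw_cons (M : QHMM X d) (x : X) (w : List X) (ρ : Matrix (Fin d) (Fin d) ℂ) :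
    M.Aw (x :: w) ρ = M.Aw w (M.A x ρ) := rfl

lemma Aw_append (M : QHMM X d) (u v : List X) (ρ : Matrix (Fin d) (Fin d) ℂ) :
    M.Aw (u ++ v) ρ = M.Aw v (M.Aw u ρ) := by
  simp [Aw, List.foldl_append]

lemma A_add (M : QHMM X d) (x : X) (ρ σ : Matrix (Fin d) (Fin d) ℂ) :
    M.A x (ρ + σ) = M.A x ρ + M.A x σ := by
  simp [A, Matrix.mul_add, Matrix.add_mul, Finset.sum_add_distrib]

lemma A_smul (M : QHMM X d) (x : X) (c : ℝ) (ρ : Matrix (Fin d) (Fin d) ℂ) :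
    M.A x (c • ρ) = c • M.A x ρ := by
  simp [A, Finset.smul_sum, Matrix.mul_smul, Matrix.smul_mul]

lemma Aw_add (M : QHMM X d) (w : List X) :
    ∀ ρ σ : Matrix (Fin d) (Fin d) ℂ, M.Aw w (ρ + σ) = M.Aw w ρ + M.Aw w σ := by
  induction w with
  | nil => intro ρ σ; rfl
  | cons x w ih => intro ρ σ; rw [Aw_cons, A_add, ih, Aw_cons, Aw_cons]

lemma Aw_smul (M : QHMM X d) (w : List X) (c : ℝ) :
    ∀ ρ : Matrix (Fin d) (Fin d) ℂ, M.Aw w (c • ρ) = c • M.Aw w ρ := by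
  induction w with
  | nil => intro ρ; rfl
  | cons x w ih => intro ρ; rw [Aw_cons, A_smul, ih, Aw_cons]

lemma A_isHermitian (M : QHMM X d) (x : X) {ρ : Matrix (Fin d) (Fin d) ℂ}
    (h : ρ.IsHermitian) : (M.A x ρ).IsHermitian := by
  unfold Matrix.IsHermitian at h ⊢
  simp [A, Matrix.conjTranspose_sum, Matrix.conjTranspose_mul, Matrix.mul_assoc, h]

lemma Aw_isHermitian (M : QHMM X d) (w : List X) :
    ∀ {ρ : Matrix (Fin d) (Fin d) ℂ}, ρ.IsHermitian → (M.Aw w ρ).IsHermitian := by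
  induction w with
  | nil => intro ρ h; exact h
  | cons x w ih => intro ρ h; rw [Aw_cons]; exact ih (M.A_isHermitian x h)

/-- The real-linear map `ρ ↦ (v ↦ Re tr[A_v(ρ)])`. -/
def Phi (M : QHMM X d) : Matrix (Fin d) (Fin d) ℂ →ₗ[ℝ] (List X → ℝ) where
  toFun ρ := fun v => (M.Aw v ρ).trace.re
  map_add' ρ σ := funext fun v => by
    simp [Aw_add, Matrix.trace_add]
  map_smul' c ρ := funext fun v => by
    simp [Aw_smul, Matrix.trace_smul]

end QHMM

/-- A real-linear map from real matrices to complex matrices whose range contains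
all Hermitian matrices. -/
def hermEmbed (d : ℕ) : Matrix (Fin d) (Fin d) ℝ →ₗ[ℝ] Matrix (Fin d) (Fin d) ℂ where
  toFun B := Matrix.of fun i j =>
    ((((B i j + B j i) / 2 : ℝ) : ℂ) + (((B i j - B j i) / 2 : ℝ) : ℂ) * Complex.I)
  map_add' B C := by
    ext i j
    simp only [Matrix.of_apply, Matrix.add_apply]
    push_cast
    ring
  map_smul' c B := by
    ext i j
    simp only [Matrix.of_apply, Matrix.smul_apply, RingHom.id_apply, smul_eq_mul,
      Complex.real_smul]
    push_cast
    ring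

lemma hermEmbed_surj_on_hermitian {d : ℕ} {H : Matrix (Fin d) (Fin d) ℂ}
    (h : H.IsHermitian) : ∃ B, hermEmbed d B = H := by
  refine ⟨Matrix.of fun i j => (H i j).re + (H i j).im, ?_⟩
  ext i j
  have hji : H j i = star (H i j) := by
    conv_lhs => rw [← h.eq]
    simp [Matrix.conjTranspose_apply]
  simp only [hermEmbed, LinearMap.coe_mk, AddHom.coe_mk]
  apply Complex.ext <;>
    simp [hji, Complex.add_re, Complex.add_im, Complex.mul_re, Complex.mul_im] <;> ring

/-- The Hankel rank of the process generated by a QHMM of memory dimension `d` is at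
most `d²`; equivalently, any QHMM generating a process of Hankel rank `ℓ_min` has
memory dimension at least `√ℓ_min`. -/
theorem qhmm_hankelRank_le {X : Type} [Fintype X] {d : ℕ} (M : QHMM X d) :
    hankelRank M.P ≤ ((d ^ 2 : ℕ) : Cardinal) := by
  set F : Matrix (Fin d) (Fin d) ℝ →ₗ[ℝ] (List X → ℝ) := M.Phi.comp (hermEmbed d) with hF
  have hspan : Submodule.span ℝ {f : List X → ℝ | ∃ u : List X, f = fun v => M.P (u ++ v)} ≤
      LinearMap.range F := by
    rw [Submodule.span_le]
    rintro f ⟨u, rfl⟩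
    obtain ⟨B, hB⟩ := hermEmbed_surj_on_hermitian
      (M.Aw_isHermitian u M.σ0_posSemidef.isHermitian)
    refine ⟨B, funext fun v => ?_⟩
    simp only [hF, LinearMap.comp_apply, hB, QHMM.Phi, LinearMap.coe_mk, AddHom.coe_mk,
      QHMM.P, QHMM.Aw_append]
  calc hankelRank M.P
      ≤ Module.rank ℝ (LinearMap.range F) := Submodule.rank_mono hspan
    _ ≤ Module.rank ℝ (Matrix (Fin d) (Fin d) ℝ) := rank_range_le F
    _ = ((d ^ 2 : ℕ) : Cardinal) := by
        rw [rank_matrix'' (R := ℝ) (Fin d) (Fin d)]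
        simp [pow_two, Cardinal.mk_fin]


end
end

section
/- There exists a classical stochastic process P over a finite alphabet, generated by a hidden Markov model with 4 latent states, whose Hankel rank equals 4 and for which every quantum hidden Markov model generating P has memory dimension at least 4. Hence the lower bound d ≥ √(Hankel rank) on the memory dimension of a QHMM is not tight for all processes. -/
open Matrix
open scoped ComplexOrder

noncomputable section

/-- A (classical, Mealy) hidden Markov model over alphabet `X` with `n` latent states:
a probability vector `η0` and substochastic nonnegative matrices `T x` whose sum is
row-stochastic. -/
structure HMM (X : Type) [Fintype X] (n : ℕ) where
  η0 : Fin n → ℝ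
  T : X → Matrix (Fin n) (Fin n) ℝ
  η0_nonneg : ∀ i, 0 ≤ η0 i
  η0_sum : ∑ i, η0 i = 1
  T_nonneg : ∀ x i j, 0 ≤ T x i j
  row_stochastic : ∀ i, ∑ x : X, ∑ j, T x i j = 1

namespace HMM

variable {X : Type} [Fintype X] {n : ℕ}

/-- The word-probability function of the HMM: `P(w) = η₀ T^(x₀)⋯T^(x_{L-1}) 𝟙`. -/
def P (H : HMM X n) (w : List X) : ℝ := H.η0 ⬝ᵥ ((w.map H.T).prod *ᵥ fun _ => 1)

end HMM



/-! ### Auxiliary development for the counterexample -/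

open Fin.CommRing

namespace QhmmNT

/-- The periodic symbol sequence 0,0,1,1 (phase `p`). -/
def sgn : Fin 4 → Fin 2 := fun p => if p.val < 2 then 0 else 1

/-- Boolean matcher: does `w` match the periodic sequence starting at phase `p`? -/
def gB : Fin 4 → List (Fin 2) → Bool
  | _, [] => true
  | p, x :: w => (x = sgn p) && gB (p + 1) w

/-- Real indicator of matching. -/
def g (p : Fin 4) (w : List (Fin 2)) : ℝ := if gB p w then 1 else 0

/-- The process: uniform mixture over the four phases. -/
def Pproc (w : List (Fin 2)) : ℝ := ∑ p : Fin 4, (1 / 4) * g p w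

/-- The length-4 word pinning down phase `p`. -/
def wrd (p : Fin 4) : List (Fin 2) := [sgn p, sgn (p + 1), sgn (p + 2), sgn (p + 3)]

lemma gB_append (u v : List (Fin 2)) :
    ∀ p : Fin 4, gB p (u ++ v) = (gB p u && gB (p + (u.length : Fin 4)) v) := by
  induction u with
  | nil => intro p; simp [gB]
  | cons x u ih =>
    intro p
    have h4 : ((x :: u).length : Fin 4) = (u.length : Fin 4) + 1 := by
      simp [List.length_cons]
    have harg : p + ((u.length : Fin 4) + 1) = p + 1 + (u.length : Fin 4) := by ring
    simp only [List.cons_append, gB, List.append_eq, ih (p + 1), h4, harg, Bool.and_assoc]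

lemma g_append (u v : List (Fin 2)) (p : Fin 4) :
    g p (u ++ v) = g p u * g (p + (u.length : Fin 4)) v := by
  unfold g
  rw [gB_append]
  cases gB p u <;> cases gB (p + (u.length : Fin 4)) v <;> simp

lemma gB_wrd : ∀ p q : Fin 4, gB q (wrd p) = decide (q = p) := by decide

lemma g_wrd (p q : Fin 4) : g q (wrd p) = if q = p then 1 else 0 := by
  rw [g, gB_wrd]
  by_cases h : q = p <;> simp [h]

lemma wrd_length (p : Fin 4) : (wrd p).length = 4 := rfl

lemma cast_four : ((4 : ℕ) : Fin 4) = 0 := by decide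

lemma g_wrd_append (p q : Fin 4) (v : List (Fin 2)) :
    g q (wrd p ++ v) = (if q = p then 1 else 0) * g q v := by
  rw [g_append, g_wrd, wrd_length, cast_four, add_zero]

lemma Pproc_wrd_append (p : Fin 4) (v : List (Fin 2)) :
    Pproc (wrd p ++ v) = (1 / 4) * g p v := by
  unfold Pproc
  have : ∀ q : Fin 4, (1 / 4 : ℝ) * g q (wrd p ++ v)
      = if q = p then (1 / 4) * g q v else 0 := by
    intro q
    rw [g_wrd_append]
    by_cases h : q = p <;> simp [h]
  rw [Finset.sum_congr rfl fun q _ => this q, Finset.sum_ite_eq' Finset.univ p]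
  simp

end QhmmNT

open QhmmNT

/-- The four-state cyclic HMM generating `Pproc`. -/
def myHMM : HMM (Fin 2) 4 where
  η0 := fun _ => 1 / 4
  T := fun x => Matrix.of fun i j => if j = i + 1 ∧ x = sgn i then 1 else 0
  η0_nonneg := fun _ => by norm_num
  η0_sum := by norm_num
  T_nonneg := by
    intro x i j
    simp only [Matrix.of_apply]
    split <;> norm_num
  row_stochastic := by
    intro i
    simp [Matrix.of_apply, ite_and, Finset.sum_ite_eq']

lemma myHMM_vec : ∀ (w : List (Fin 2)) (i : Fin 4),
    ((w.map myHMM.T).prod *ᵥ fun _ => (1 : ℝ)) i = g i w := by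
  intro w
  induction w with
  | nil => intro i; simp [g, gB]
  | cons x w ih =>
    intro i
    rw [List.map_cons, List.prod_cons, ← Matrix.mulVec_mulVec]
    have : (myHMM.T x *ᵥ ((w.map myHMM.T).prod *ᵥ fun _ => (1 : ℝ))) i
        = ∑ j : Fin 4, (if j = i + 1 ∧ x = sgn i then (1:ℝ) else 0)
            * ((w.map myHMM.T).prod *ᵥ fun _ => (1 : ℝ)) j := rfl
    rw [this]
    simp only [ite_and, ite_mul, one_mul, zero_mul]
    rw [Finset.sum_ite_eq' Finset.univ (i + 1)]
    simp only [Finset.mem_univ, if_true, ih]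
    by_cases h : x = sgn i <;> simp [g, gB, h]

lemma myHMM_P (w : List (Fin 2)) : myHMM.P w = Pproc w := by
  unfold HMM.P Pproc
  rw [dotProduct]
  exact Finset.sum_congr rfl fun i _ => by rw [myHMM_vec w i]; rfl

/-! ### The Hankel rank computation -/

def Gfun : Fin 4 → (List (Fin 2) → ℝ) := fun p v => (1 / 4) * g p v

lemma Gfun_mem (p : Fin 4) :
    Gfun p ∈ {f : List (Fin 2) → ℝ | ∃ u : List (Fin 2), f = fun v => Pproc (u ++ v)} :=
  ⟨wrd p, by funext v; rw [Pproc_wrd_append]; rfl⟩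

lemma hankel_span_eq :
    Submodule.span ℝ {f : List (Fin 2) → ℝ | ∃ u : List (Fin 2), f = fun v => Pproc (u ++ v)}
      = Submodule.span ℝ (Set.range Gfun) := by
  apply le_antisymm
  · rw [Submodule.span_le]
    rintro f ⟨u, rfl⟩
    have : (fun v => Pproc (u ++ v))
        = ∑ q : Fin 4, g q u • Gfun (q + (u.length : Fin 4)) := by
      funext v
      rw [Finset.sum_apply]
      unfold Pproc
      refine Finset.sum_congr rfl fun q _ => ?_
      rw [g_append]
      simp only [Pi.smul_apply, smul_eq_mul, Gfun]
      ring
    rw [this]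
    exact Submodule.sum_mem _ fun q _ =>
      Submodule.smul_mem _ _ (Submodule.subset_span ⟨q + (u.length : Fin 4), rfl⟩)
  · rw [Submodule.span_le]
    rintro f ⟨p, rfl⟩
    exact Submodule.subset_span (Gfun_mem p)

lemma Gfun_li : LinearIndependent ℝ Gfun := by
  rw [Fintype.linearIndependent_iff]
  intro c hc p
  have h := congrFun hc (wrd p)
  rw [Finset.sum_apply] at h
  have : ∀ q : Fin 4, (c q • Gfun q) (wrd p) = if q = p then c q * (1/4) else 0 := by
    intro q
    simp only [Pi.smul_apply, smul_eq_mul, Gfun, g_wrd]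
    by_cases hqp : q = p <;> simp [hqp]
  rw [Finset.sum_congr rfl fun q _ => this q, Finset.sum_ite_eq' Finset.univ p] at h
  simp only [Finset.mem_univ, if_true, Pi.zero_apply] at h
  linarith

lemma hankelRank_Pproc : hankelRank Pproc = 4 := by
  unfold hankelRank
  rw [hankel_span_eq, rank_span Gfun_li, Cardinal.mk_range_eq _ Gfun_li.injective]
  simp

/-! ### QHMM lower bound -/

open scoped MatrixOrder

section Quantum

variable {d : ℕ} (M : QHMM (Fin 2) d)

lemma Aw_nil (ρ : Matrix (Fin d) (Fin d) ℂ) : M.Aw [] ρ = ρ := rfl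

lemma Aw_cons (x : Fin 2) (w : List (Fin 2)) (ρ : Matrix (Fin d) (Fin d) ℂ) :
    M.Aw (x :: w) ρ = M.Aw w (M.A x ρ) := rfl

lemma Aw_append (u v : List (Fin 2)) (ρ : Matrix (Fin d) (Fin d) ℂ) :
    M.Aw (u ++ v) ρ = M.Aw v (M.Aw u ρ) := by
  unfold QHMM.Aw
  exact List.foldl_append

lemma psd_sum {ι : Type*} (s : Finset ι) (f : ι → Matrix (Fin d) (Fin d) ℂ)
    (h : ∀ i ∈ s, (f i).PosSemidef) : (∑ i ∈ s, f i).PosSemidef := by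
  classical
  induction s using Finset.induction_on with
  | empty => simpa using Matrix.PosSemidef.zero
  | insert a s hnotmem ih =>
    rw [Finset.sum_insert hnotmem]
    exact (h _ (Finset.mem_insert_self _ _)).add
      (ih fun i hi => h i (Finset.mem_insert_of_mem hi))

lemma A_posSemidef (x : Fin 2) {ρ : Matrix (Fin d) (Fin d) ℂ} (hρ : ρ.PosSemidef) :
    (M.A x ρ).PosSemidef := by
  unfold QHMM.A
  exact psd_sum _ _ fun y _ => hρ.mul_mul_conjTranspose_same (M.K x y)

lemma Aw_posSemidef (w : List (Fin 2)) :
    ∀ {ρ : Matrix (Fin d) (Fin d) ℂ}, ρ.PosSemidef → (M.Aw w ρ).PosSemidef := by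
  induction w with
  | nil => intro ρ hρ; exact hρ
  | cons x w ih => intro ρ hρ; rw [Aw_cons]; exact ih (A_posSemidef M x hρ)

/-- The PSD matrix representing the trace functional of the word `w`. -/
def Fm : List (Fin 2) → Matrix (Fin d) (Fin d) ℂ
  | [] => 1
  | x :: w => ∑ y : Fin M.m, (M.K x y)ᴴ * Fm w * (M.K x y)

lemma Fm_posSemidef (w : List (Fin 2)) : (Fm M w).PosSemidef := by
  induction w with
  | nil => exact Matrix.PosSemidef.one
  | cons x w ih =>
    rw [Fm]
    exact psd_sum _ _ fun y _ => ih.conjTranspose_mul_mul_same (M.K x y)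

lemma trace_Aw (w : List (Fin 2)) :
    ∀ ρ : Matrix (Fin d) (Fin d) ℂ, (M.Aw w ρ).trace = (Fm M w * ρ).trace := by
  induction w with
  | nil => intro ρ; rw [Aw_nil, Fm, one_mul]
  | cons x w ih =>
    intro ρ
    rw [Aw_cons, ih, QHMM.A, Finset.mul_sum, Matrix.trace_sum, Fm, Finset.sum_mul,
      Matrix.trace_sum]
    refine Finset.sum_congr rfl fun y _ => ?_
    rw [show Fm M w * (M.K x y * ρ * (M.K x y)ᴴ)
        = Fm M w * (M.K x y * ρ) * (M.K x y)ᴴ by simp only [mul_assoc],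
      Matrix.trace_mul_cycle]
    simp only [mul_assoc]

lemma psd_diag_nonneg {S : Matrix (Fin d) (Fin d) ℂ} (hS : S.PosSemidef) (k : Fin d) :
    0 ≤ S k k := by
  exact hS.diag_nonneg

lemma psd_trace_re_zero {S : Matrix (Fin d) (Fin d) ℂ} (hS : S.PosSemidef)
    (h : S.trace.re = 0) (k : Fin d) : S k k = 0 := by
  have hdiag : ∀ k : Fin d, 0 ≤ (S k k).re ∧ 0 = (S k k).im :=
    fun k => Complex.nonneg_iff.mp (psd_diag_nonneg hS k)
  have htr : ∑ k : Fin d, (S k k).re = 0 := by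
    have : S.trace.re = ∑ k : Fin d, (S k k).re := Complex.re_sum _ _
    rw [← this, h]
  have hre : (S k k).re = 0 :=
    (Finset.sum_eq_zero_iff_of_nonneg (fun i _ => (hdiag i).1)).mp htr k (Finset.mem_univ k)
  exact Complex.ext hre ((hdiag k).2.symm)

lemma psd_mulVec_zero {F : Matrix (Fin d) (Fin d) ℂ} (hF : F.PosSemidef)
    {x : Fin d → ℂ} (h : dotProduct (star x) (F *ᵥ x) = 0) : F *ᵥ x = 0 := by
  obtain ⟨C, rfl⟩ : ∃ C : Matrix (Fin d) (Fin d) ℂ, F = Cᴴ * C :=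
    ⟨CFC.sqrt F, by
      rw [(Matrix.nonneg_iff_posSemidef.mp (CFC.sqrt_nonneg F)).1.eq,
        CFC.sqrt_mul_sqrt_self F (Matrix.nonneg_iff_posSemidef.mpr hF)]⟩
  rw [← Matrix.mulVec_mulVec, Matrix.dotProduct_mulVec, ← Matrix.star_mulVec,
    dotProduct_star_self_eq_zero] at h
  rw [← Matrix.mulVec_mulVec, h, Matrix.mulVec_zero]

lemma quad_eq {R F : Matrix (Fin d) (Fin d) ℂ} (hR : R.IsHermitian) (k : Fin d) :
    dotProduct (star fun a => R a k) (F *ᵥ fun a => R a k) = (R * F * R) k k := by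
  simp only [dotProduct, Matrix.mulVec, Matrix.mul_apply, Pi.star_apply,
    Finset.sum_mul, Finset.mul_sum]
  rw [Finset.sum_comm]
  refine Finset.sum_congr rfl fun a _ => Finset.sum_congr rfl fun b _ => ?_
  rw [← hR.apply a k, hR.apply k b]
  ring

end Quantum

/-- There is a process generated by a four-state HMM whose Hankel rank is `4`, yet
every QHMM generating it needs memory dimension at least `4`: the bound
`d ≥ √(Hankel rank)` is not tight for all processes. -/
theorem qhmm_bound_not_tight :
    ∃ (k : ℕ) (P : List (Fin k) → ℝ) (H : HMM (Fin k) 4),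
      (∀ w : List (Fin k), H.P w = P w) ∧
      hankelRank P = 4 ∧
      ∀ (d : ℕ) (M : QHMM (Fin k) d), (∀ w : List (Fin k), M.P w = P w) → 4 ≤ d := by
  refine ⟨2, Pproc, myHMM, myHMM_P, hankelRank_Pproc, ?_⟩
  intro d M hM
  set F : Fin 4 → Matrix (Fin d) (Fin d) ℂ := fun j => Fm M (wrd j) with hFdef
  set ρ : Fin 4 → Matrix (Fin d) (Fin d) ℂ := fun i => M.Aw (wrd i) M.σ0 with hρdef
  have hρpsd : ∀ i, (ρ i).PosSemidef := fun i => Aw_posSemidef M (wrd i) M.σ0_posSemidef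
  have hFpsd : ∀ j, (F j).PosSemidef := fun j => Fm_posSemidef M (wrd j)
  have htrace : ∀ i j, (F j * ρ i).trace.re = if i = j then 1 / 4 else 0 := by
    intro i j
    have h1 : (F j * ρ i).trace = (M.Aw (wrd i ++ wrd j) M.σ0).trace := by
      rw [Aw_append, trace_Aw]
    have h2 : (M.Aw (wrd i ++ wrd j) M.σ0).trace.re = Pproc (wrd i ++ wrd j) := hM _
    rw [h1, h2, Pproc_wrd_append, g_wrd]
    by_cases h : i = j <;> simp [h]
  set R : Fin 4 → Matrix (Fin d) (Fin d) ℂ := fun i => CFC.sqrt (ρ i) with hRdef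
  have hRH : ∀ i, (R i).IsHermitian := fun i => (Matrix.nonneg_iff_posSemidef.mp (CFC.sqrt_nonneg (ρ i))).1
  have hR2 : ∀ i, R i * R i = ρ i := fun i => CFC.sqrt_mul_sqrt_self (ρ i) (Matrix.nonneg_iff_posSemidef.mpr (hρpsd i))
  set S : Fin 4 → Fin 4 → Matrix (Fin d) (Fin d) ℂ := fun i j => R i * F j * R i with hSdef
  have hSpsd : ∀ i j, (S i j).PosSemidef := by
    intro i j
    have h := (hFpsd j).mul_mul_conjTranspose_same (R i)
    rwa [hRH i] at h
  have hStr : ∀ i j, (S i j).trace = (F j * ρ i).trace := by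
    intro i j
    calc (R i * F j * R i).trace = (R i * R i * F j).trace := Matrix.trace_mul_cycle _ _ _
      _ = (ρ i * F j).trace := by rw [hR2]
      _ = (F j * ρ i).trace := Matrix.trace_mul_comm _ _
  have hSdiag0 : ∀ i j, i ≠ j → ∀ k, S i j k k = 0 := by
    intro i j hij k
    apply psd_trace_re_zero (hSpsd i j) _ k
    rw [hStr i j, htrace i j]
    simp [hij]
  have hex : ∀ i, ∃ k, S i i k k ≠ 0 := by
    intro i
    by_contra h
    push_neg at h
    have htr0 : (S i i).trace = 0 := by
      simp [Matrix.trace, Matrix.diag, h]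
    have h14 := htrace i i
    rw [← hStr i i, htr0] at h14
    norm_num at h14
  choose kk hkk using hex
  set v : Fin 4 → (Fin d → ℂ) := fun i a => R i a (kk i) with hvdef
  have hquad : ∀ i j, dotProduct (star (v i)) (F j *ᵥ v i) = S i j (kk i) (kk i) :=
    fun i j => quad_eq (hRH i) (kk i)
  have hFv0 : ∀ i j, i ≠ j → F j *ᵥ v i = 0 := by
    intro i j hij
    exact psd_mulVec_zero (hFpsd j) (by rw [hquad i j, hSdiag0 i j hij])
  have hFvj : ∀ j, F j *ᵥ v j ≠ 0 := by
    intro j h0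
    apply hkk j
    rw [← hquad j j, h0, dotProduct_zero]
  have li : LinearIndependent ℂ v := by
    rw [Fintype.linearIndependent_iff]
    intro c hc j
    have h0 : ∑ i : Fin 4, c i • (F j *ᵥ v i) = 0 := by
      calc ∑ i : Fin 4, c i • (F j *ᵥ v i)
          = ∑ i : Fin 4, (F j).mulVecLin (c i • v i) := by
            simp [Matrix.mulVecLin_apply, _root_.map_smul]
        _ = (F j).mulVecLin (∑ i : Fin 4, c i • v i) := (map_sum _ _ _).symm
        _ = 0 := by rw [hc]; simp
    have h1 : c j • (F j *ᵥ v j) = 0 := by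
      rwa [Finset.sum_eq_single j (fun i _ hij => by rw [hFv0 i j hij, smul_zero])
        (fun h => absurd (Finset.mem_univ j) h)] at h0
    rcases smul_eq_zero.mp h1 with h | h
    · exact h
    · exact absurd h (hFvj j)
  have hcard := li.fintype_card_le_finrank
  simpa [Module.finrank_fin_fun] using hcard


end
end
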